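/- arXiv:2201.05319 — 2 statements merged into one kernel-verified Lean document; each statement's English description precedes it below -/
import Mathlib

section
/- Let Θ be a set and for each n let Q(·, X_n): Θ → ℝ be a random function. Suppose (i) there is a continuous function Q*: Θ → ℝ uniquely maximized at θ*; (ii) for every ε > 0, the supremum of Q* over Θ \ B(ε) exists and δ := Q*(θ*) − sup_{θ ∈ Θ \ B(ε)} Q*(θ) > 0, where B(ε) = {θ : ‖θ − θ*‖ < ε}; (iii) sup_{θ ∈ Θ} |Q(θ, X_n) − Q*(θ)| → 0 in probability as n → ∞. Then any sequence of maximizers θ̂_n = argmax_{θ ∈ Θ} Q(θ, X_n) satisfies ‖θ̂_n − θ*‖ → 0 in probability. -/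
/-!
If `θ̂_n` lies outside the `ε`-ball around `θ*`, then `Q*` is lower at `θ̂_n` than at `θ*` by at
least the gap `δ`, while `Q(·, X_n)` is not. Hence `Q(·, X_n)` and `Q*` differ by more than `δ / 3`
at `θ*` or at `θ̂_n`, so that event lies inside the event that the uniform deviation exceeds
`δ / 3`, whose probability tends to `0`.
-/

open MeasureTheory Filter Topology

lemma lt_abs_sub_or_lt_abs_sub_of_le_of_add_le {α : Type*} {q q' : α → ℝ} {a b : α} {δ : ℝ}
    (hδ : 0 < δ) (hq : q a ≤ q b) (hgap : q' b + δ ≤ q' a) :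
    δ / 3 < |q a - q' a| ∨ δ / 3 < |q b - q' b| := by
  by_contra! h
  obtain ⟨ha, hb⟩ := h
  linarith [(abs_le.mp ha).1, (abs_le.mp hb).2]

lemma tendsto_measure_zero_of_subset {Ω ι : Type*} [MeasurableSpace Ω] {μ : Measure Ω}
    {l : Filter ι} {A B : ι → Set Ω} (hAB : ∀ i, A i ⊆ B i)
    (hB : Tendsto (fun i => μ (B i)) l (𝓝 0)) : Tendsto (fun i => μ (A i)) l (𝓝 0) :=
  tendsto_of_tendsto_of_tendsto_of_le_of_le tendsto_const_nhds hB (fun _ => zero_le)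
    (fun i => measure_mono (hAB i))

lemma apply_le_csSup_image_diff_ball {E : Type*} [SeminormedAddCommGroup E] {Θ : Set E}
    {f : E → ℝ} {x θ : E} {ε : ℝ} (hbdd : BddAbove (f '' (Θ \ Metric.ball x ε)))
    (hθ : θ ∈ Θ) (hfar : ε ≤ ‖θ - x‖) : f θ ≤ sSup (f '' (Θ \ Metric.ball x ε)) :=
  le_csSup hbdd ⟨θ, ⟨hθ, by simpa [dist_eq_norm] using hfar⟩, rfl⟩

theorem argmax_consistency_general
    {E : Type*} [NormedAddCommGroup E]
    {Ω : Type*} [MeasurableSpace Ω] (μ : Measure Ω)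
    (Θ : Set E) (Qs : E → ℝ) (θstar : E) (hθstar : θstar ∈ Θ)
    (Q : ℕ → E → Ω → ℝ) (θhat : ℕ → Ω → E)
    (hgap : ∀ ε > 0, BddAbove (Qs '' (Θ \ Metric.ball θstar ε)) ∧
      sSup (Qs '' (Θ \ Metric.ball θstar ε)) < Qs θstar)
    (hunif : ∀ δ > 0,
      Tendsto (fun n => μ {ω | ∃ θ ∈ Θ, δ < |Q n θ ω - Qs θ|}) atTop (𝓝 0))
    (hhatmem : ∀ n ω, θhat n ω ∈ Θ)
    (hhatmax : ∀ n ω, ∀ θ ∈ Θ, Q n θ ω ≤ Q n (θhat n ω) ω) :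
    ∀ ε > 0, Tendsto (fun n => μ {ω | ε < ‖θhat n ω - θstar‖}) atTop (𝓝 0) := by
  intro ε hε
  obtain ⟨hbdd, hlt⟩ := hgap ε hε
  set δ := Qs θstar - sSup (Qs '' (Θ \ Metric.ball θstar ε))
  have hδ : 0 < δ := sub_pos.mpr hlt
  refine tendsto_measure_zero_of_subset (fun n ω hfar => ?_) (hunif (δ / 3) (by positivity))
  have hgapω : Qs (θhat n ω) + δ ≤ Qs θstar := by
    linarith [apply_le_csSup_image_diff_ball hbdd (hhatmem n ω) (le_of_lt hfar)]
  rcases lt_abs_sub_or_lt_abs_sub_of_le_of_add_le (q := fun θ => Q n θ ω) hδ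
    (hhatmax n ω θstar hθstar) hgapω with h | h
  exacts [⟨θstar, hθstar, h⟩, ⟨θhat n ω, hhatmem n ω, h⟩]

/-- Argmax consistency: if `Q* ` is continuous and uniquely maximized at `θ*`,
the sup-gap over the complement of every ball is positive, and
`sup_{θ ∈ Θ} |Q(θ, X_n) − Q*(θ)| → 0` in probability, then any sequence of
maximizers `θ̂_n` converges to `θ*` in probability. -/
theorem argmax_consistency
    {E : Type*} [NormedAddCommGroup E] [NormedSpace ℝ E]
    {Ω : Type*} [MeasurableSpace Ω] (μ : Measure Ω) [IsProbabilityMeasure μ]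
    (Θ : Set E) (Qs : E → ℝ) (θstar : E) (hθstar : θstar ∈ Θ)
    (Q : ℕ → E → Ω → ℝ) (θhat : ℕ → Ω → E)
    (hcont : ContinuousOn Qs Θ)
    (hmax : ∀ θ ∈ Θ, θ ≠ θstar → Qs θ < Qs θstar)
    (hgap : ∀ ε > 0, BddAbove (Qs '' (Θ \ Metric.ball θstar ε)) ∧
      sSup (Qs '' (Θ \ Metric.ball θstar ε)) < Qs θstar)
    (hunif : ∀ δ > 0,
      Tendsto (fun n => μ {ω | ∃ θ ∈ Θ, δ < |Q n θ ω - Qs θ|}) atTop (𝓝 0))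
    (hhatmem : ∀ n ω, θhat n ω ∈ Θ)
    (hhatmax : ∀ n ω, ∀ θ ∈ Θ, Q n θ ω ≤ Q n (θhat n ω) ω) :
    ∀ ε > 0, Tendsto (fun n => μ {ω | ε < ‖θhat n ω - θstar‖}) atTop (𝓝 0) :=
  argmax_consistency_general μ Θ Qs θstar hθstar Q θhat hgap hunif hhatmem hhatmax
end

section
/- For the Gaussian (RBF) kernel K(x, y) = exp(−γ‖x − y‖²) with γ > 0 on ℝ^p, if x_1, …, x_n are pairwise distinct points, then the kernel matrix (K(x_i, x_j))_{i,j} is positive definite, hence of full rank n. -/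
/-!
Writing `exp (-γ ‖w‖²)` as the Fourier transform of the Gaussian `exp (-‖v‖² / (4γ))` turns the
quadratic form `∑ᵢⱼ cᵢ cⱼ exp (-γ ‖xᵢ - xⱼ‖²)` into a positive multiple of
`∫ exp (-‖v‖² / (4γ)) |∑ᵢ cᵢ exp (i ⟪xᵢ, v⟫)|² dv`. The integrand is continuous and nonnegative,
and it is not identically zero, because the characters `v ↦ exp (i ⟪xᵢ, v⟫)` with distinct
frequencies are linearly independent (Dedekind).
-/

open Complex MeasureTheory
open scoped RealInnerProductSpace Real

theorem linearIndependent_addChar (G L : Type*) [AddMonoid G] [CommRing L] [IsDomain L] :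
    LinearIndependent L ((⇑) : AddChar G L → G → L) := by
  have h := (linearIndependent_monoidHom (Multiplicative G) L).comp _
    AddChar.toMonoidHomEquiv.injective
  exact h.map' (LinearMap.funLeft L L Multiplicative.toAdd)
    (LinearMap.ker_eq_bot.mpr (LinearMap.funLeft_injective_of_surjective _ _ _
      Multiplicative.toAdd.surjective))

section

variable {E : Type*} [NormedAddCommGroup E] [InnerProductSpace ℝ E]

noncomputable def expInnerChar (a : E) : AddChar E ℂ where
  toFun v := cexp (⟪a, v⟫ * I)
  map_zero_eq_one' := by simp
  map_add_eq_mul' v w := by simp [inner_add_right, add_mul, Complex.exp_add]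

lemma expInnerChar_apply (a v : E) : expInnerChar a v = cexp (⟪a, v⟫ * I) := rfl

@[fun_prop]
lemma continuous_expInnerChar (a : E) : Continuous (expInnerChar a) := by
  change Continuous fun v => cexp (⟪a, v⟫ * I)
  fun_prop

lemma expInnerChar_injective : Function.Injective (expInnerChar : E → AddChar E ℂ) := by
  intro a b h
  -- `char _ _ w a` unfolds to `exp (⟪a, w⟫ * I)`
  refine BoundedContinuousFunction.ext_of_char_eq Real.continuous_probChar Real.probChar_ne_one
    (L := innerₗ E) continuous_inner (fun v hv h0 => ?_) fun w => DFunLike.congr_fun h w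
  exact hv (inner_self_eq_zero.mp (LinearMap.congr_fun h0 v))

variable {ι : Type*} [Fintype ι]

lemma exists_sum_mul_expInnerChar_ne_zero {x : ι → E} (hx : Function.Injective x)
    {c : ι → ℂ} (hc : c ≠ 0) : ∃ v, ∑ i, c i * expInnerChar (x i) v ≠ 0 := by
  by_contra! h
  have hli := (linearIndependent_addChar E ℂ).comp _ (expInnerChar_injective.comp hx)
  refine hc (funext (Fintype.linearIndependent_iff.mp hli c (funext fun v => ?_)))
  simpa using h v

lemma normSq_sum_expInnerChar (c : ι → ℝ) (x : ι → E) (v : E) :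
    (normSq (∑ i, c i * expInnerChar (x i) v) : ℂ) =
      ∑ i, ∑ j, (c i * c j : ℂ) * cexp (I * ⟪x i - x j, v⟫) := by
  rw [← mul_conj, map_sum, Finset.sum_mul_sum]
  refine Finset.sum_congr rfl fun i _ => Finset.sum_congr rfl fun j _ => ?_
  simp only [expInnerChar_apply, map_mul, conj_ofReal, ← Complex.exp_conj, conj_I, inner_sub_left,
    ofReal_sub, mul_sub, Complex.exp_sub]
  rw [mul_neg, Complex.exp_neg, mul_comm I, mul_comm I]
  ring

lemma ofReal_exp_mul_normSq_sum_expInnerChar (b : ℝ) (c : ι → ℝ) (x : ι → E) (v : E) :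
    ((Real.exp (-b * ‖v‖ ^ 2) * normSq (∑ i, c i * expInnerChar (x i) v) : ℝ) : ℂ) =
      ∑ i, ∑ j, (c i * c j : ℂ) * cexp (-b * ‖v‖ ^ 2 + I * ⟪x i - x j, v⟫) := by
  rw [ofReal_mul, normSq_sum_expInnerChar, Finset.mul_sum]
  refine Finset.sum_congr rfl fun i _ => ?_
  rw [Finset.mul_sum]
  refine Finset.sum_congr rfl fun j _ => ?_
  push_cast
  rw [Complex.exp_add]
  ring

section Integral

variable [FiniteDimensional ℝ E] [MeasurableSpace E] [BorelSpace E]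

lemma integrable_exp_mul_normSq_sum_expInnerChar {b : ℝ} (hb : 0 < b) (c : ι → ℝ) (x : ι → E) :
    Integrable fun v => Real.exp (-b * ‖v‖ ^ 2) * normSq (∑ i, c i * expInnerChar (x i) v) := by
  have h : Integrable fun v =>
      ((Real.exp (-b * ‖v‖ ^ 2) * normSq (∑ i, c i * expInnerChar (x i) v) : ℝ) : ℂ) := by
    simp_rw [ofReal_exp_mul_normSq_sum_expInnerChar]
    exact integrable_finsetSum _ fun i _ => integrable_finsetSum _ fun j _ =>
      (GaussianFourier.integrable_cexp_neg_mul_sq_norm_add (by simpa) I _).const_mul _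
  simpa only [RCLike.re_to_complex, ofReal_re] using h.re

lemma integral_exp_mul_normSq_sum_expInnerChar {γ : ℝ} (hγ : 0 < γ) (c : ι → ℝ) (x : ι → E) :
    ∫ v, Real.exp (-(4 * γ)⁻¹ * ‖v‖ ^ 2) * normSq (∑ i, c i * expInnerChar (x i) v) =
      (4 * π * γ) ^ (Module.finrank ℝ E / 2 : ℝ) *
        ∑ i, ∑ j, c i * c j * Real.exp (-γ * ‖x i - x j‖ ^ 2) := by
  have hb : 0 < (((4 * γ)⁻¹ : ℝ) : ℂ).re := by rw [ofReal_re]; positivity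
  have hconst : (π / ((4 * γ)⁻¹ : ℝ)) ^ (Module.finrank ℝ E / 2 : ℂ) =
      (((4 * π * γ) ^ (Module.finrank ℝ E / 2 : ℝ) : ℝ) : ℂ) := by
    rw [ofReal_cpow (by positivity)]
    push_cast
    rw [div_inv_eq_mul]
    ring_nf
  have hgauss (w : E) :
      cexp (I ^ 2 * ‖w‖ ^ 2 / (4 * ((4 * γ)⁻¹ : ℝ))) = Real.exp (-γ * ‖w‖ ^ 2) := by
    push_cast
    field_simp
    rw [I_sq]
    ring_nf
  apply ofReal_injective
  rw [← integral_complex_ofReal]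
  simp_rw [ofReal_exp_mul_normSq_sum_expInnerChar]
  rw [integral_finsetSum _ fun i _ => integrable_finsetSum _ fun j _ =>
      (GaussianFourier.integrable_cexp_neg_mul_sq_norm_add hb I _).const_mul _]
  simp_rw [integral_finsetSum _ fun j _ =>
      (GaussianFourier.integrable_cexp_neg_mul_sq_norm_add hb I _).const_mul _,
    integral_const_mul, GaussianFourier.integral_cexp_neg_mul_sq_norm_add hb, hconst, hgauss]
  push_cast [Finset.mul_sum]
  exact Finset.sum_congr rfl fun i _ => Finset.sum_congr rfl fun j _ => by ring

end Integral

theorem sum_mul_exp_neg_mul_norm_sub_sq_pos [FiniteDimensional ℝ E] {γ : ℝ} (hγ : 0 < γ)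
    {x : ι → E} (hx : Function.Injective x) {c : ι → ℝ} (hc : c ≠ 0) :
    0 < ∑ i, ∑ j, c i * c j * Real.exp (-γ * ‖x i - x j‖ ^ 2) := by
  borelize E
  obtain ⟨v, hv⟩ := exists_sum_mul_expInnerChar_ne_zero hx (c := fun i => (c i : ℂ))
    fun h => hc (funext fun i => ofReal_eq_zero.mp (congrFun h i))
  have hpos := integral_pos_of_integrable_nonneg_nonzero (μ := volume) (x := v) (by fun_prop)
    (integrable_exp_mul_normSq_sum_expInnerChar (b := (4 * γ)⁻¹) (by positivity) c x)
    (fun v => mul_nonneg (Real.exp_nonneg _) (normSq_nonneg _))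
    (mul_ne_zero (Real.exp_ne_zero _) (normSq_eq_zero.not.mpr hv))
  rw [integral_exp_mul_normSq_sum_expInnerChar hγ] at hpos
  exact pos_of_mul_pos_right hpos (by positivity)

end

namespace Matrix

theorem posDef_of_exp_neg_mul_norm_sub_sq {E ι : Type*} [NormedAddCommGroup E]
    [InnerProductSpace ℝ E] [FiniteDimensional ℝ E] [Fintype ι] {γ : ℝ} (hγ : 0 < γ)
    {x : ι → E} (hx : Function.Injective x) :
    (Matrix.of fun i j => Real.exp (-γ * ‖x i - x j‖ ^ 2)).PosDef := by
  refine .of_dotProduct_mulVec_pos (Matrix.ext fun i j => by simp [norm_sub_rev]) fun c hc => ?_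
  have hform : star c ⬝ᵥ (of (fun i j => Real.exp (-γ * ‖x i - x j‖ ^ 2)) *ᵥ c) =
      ∑ i, ∑ j, c i * c j * Real.exp (-γ * ‖x i - x j‖ ^ 2) := by
    simp only [dotProduct, mulVec, Pi.star_apply, star_trivial, of_apply, Finset.mul_sum]
    exact Finset.sum_congr rfl fun i _ => Finset.sum_congr rfl fun j _ => by ring
  exact hform ▸ sum_mul_exp_neg_mul_norm_sub_sq_pos hγ hx hc

end Matrix

/-- Strict positive definiteness of the Gaussian (RBF) kernel: for pairwise
distinct points `x₁, …, xₙ ∈ ℝ^p` and `γ > 0`, the kernel matrix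
`(exp(−γ‖xᵢ − xⱼ‖²))_{i,j}` is positive definite (hence of full rank). -/
theorem gaussian_kernel_matrix_posDef
    {n p : ℕ} (γ : ℝ) (hγ : 0 < γ)
    (x : Fin n → EuclideanSpace ℝ (Fin p)) (hx : Function.Injective x)
    (K : Matrix (Fin n) (Fin n) ℝ)
    (hK : ∀ i j, K i j = Real.exp (-γ * ‖x i - x j‖ ^ 2)) :
    K.PosDef := by
  obtain rfl : K = Matrix.of fun i j => Real.exp (-γ * ‖x i - x j‖ ^ 2) := Matrix.ext hK
  exact Matrix.posDef_of_exp_neg_mul_norm_sub_sq hγ hx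
end
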